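/- For every integer n ≥ 0, the set B_{2n} is empty and the set B_{2n+1} has cardinality c_n, the n-th Catalan number. -/

import Mathlib

/-- A plane tree: a root together with a finite ordered list of plane subtrees. -/
inductive PlaneTree : Type
  | node : List PlaneTree → PlaneTree

namespace PlaneTree

/-- The number of vertices of a plane tree. -/
def numVertices : PlaneTree → ℕ
  | node ts => 1 + (ts.attach.map fun x => numVertices x.1).sum
decreasing_by
  have := List.sizeOf_lt_of_mem x.2
  simp only [PlaneTree.node.sizeOf_spec]
  omega

/-- The number of edges of a plane tree: one less than the number of vertices. -/
def numEdges (t : PlaneTree) : ℕ := t.numVertices - 1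

/-- The number of leaves (vertices with no children) of a plane tree. -/
def numLeaves : PlaneTree → ℕ
  | node [] => 1
  | node (t :: ts) => ((t :: ts).attach.map fun x => numLeaves x.1).sum
decreasing_by
  have := List.sizeOf_lt_of_mem x.2
  simp only [PlaneTree.node.sizeOf_spec]
  omega

end PlaneTree

/-- The predicate describing membership in `B_n`: a plane tree in which every leaf is
the first child of its parent and the first child of every internal vertex is a leaf.
Equivalently, the root is internal, its first child is a leaf, and all the remaining
subtrees again have this property. -/
inductive PlaneTree.InB : PlaneTree → Prop
  | mk (cs : List PlaneTree) (h : ∀ t ∈ cs, PlaneTree.InB t) :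
      PlaneTree.InB (PlaneTree.node (PlaneTree.node [] :: cs))

namespace PlaneTree

lemma numVertices_node (ts : List PlaneTree) :
    numVertices (node ts) = 1 + (ts.map numVertices).sum := by
  rw [numVertices]
  congr 1
  exact congrArg List.sum (List.attach_map_val (l := ts) (f := numVertices))

lemma one_le_numVertices (t : PlaneTree) : 1 ≤ t.numVertices := by
  cases t with
  | node ts => rw [numVertices_node]; omega

def children : PlaneTree → List PlaneTree
  | node ts => ts

@[simp] lemma node_children (t : PlaneTree) : node t.children = t := by
  cases t; rfl

def psi : PlaneTree → PlaneTree
  | node ts => node (node [] :: ts.attach.map fun x => psi x.1)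
decreasing_by
  have := List.sizeOf_lt_of_mem x.2
  simp only [PlaneTree.node.sizeOf_spec]
  omega

lemma psi_node (ts : List PlaneTree) :
    psi (node ts) = node (node [] :: ts.map psi) := by
  rw [psi]
  congr 1
  exact congrArg _ (List.attach_map_val (l := ts) (f := psi))

lemma psi_inB (t : PlaneTree) : (psi t).InB := by
  induction t using psi.induct with
  | _ ts ih =>
    rw [psi_node]
    refine .mk _ ?_
    intro u hu
    simp only [List.mem_map] at hu
    obtain ⟨v, hv, rfl⟩ := hu
    exact ih ⟨v, hv⟩

lemma psi_vertices (t : PlaneTree) : (psi t).numVertices = 2 * t.numVertices := by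
  induction t using psi.induct with
  | _ ts ih =>
    rw [psi_node, numVertices_node, numVertices_node]
    have key : ((ts.map psi).map numVertices).sum = 2 * ((ts.map numVertices).sum) := by
      rw [List.map_map]
      induction ts with
      | nil => simp
      | cons a l ihl =>
        simp only [List.map_cons, List.sum_cons, Function.comp]
        rw [ihl (fun x => ih ⟨x.1, List.mem_cons_of_mem a x.2⟩),
          ih ⟨a, List.mem_cons_self (a := a) (l := l)⟩]
        ring
    simp only [List.map_cons, List.sum_cons, numVertices_node, List.map_nil, List.sum_nil, key]
    ring

lemma psi_inj : Function.Injective psi := by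
  intro u
  induction u using psi.induct with
  | _ ts ih =>
    intro v h
    cases v with
    | node ss =>
      rw [psi_node, psi_node] at h
      injection h with h
      injection h with _ h
      congr 1
      induction ts generalizing ss with
      | nil =>
        cases ss with
        | nil => rfl
        | cons => simp at h
      | cons a l ihl =>
        cases ss with
        | nil => simp at h
        | cons b m =>
          simp only [List.map_cons, List.cons.injEq] at h
          have h1 : a = b := ih ⟨a, List.mem_cons_self (a := a) (l := l)⟩ h.1
          have h2 := ihl (fun x => ih ⟨x.1, List.mem_cons_of_mem a x.2⟩) m h.2
          rw [h1, h2]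

lemma inB_exists (t : PlaneTree) (h : t.InB) : ∃ u, psi u = t := by
  induction h with
  | mk cs h ih =>
    have : ∃ us : List PlaneTree, us.map psi = cs := by
      clear h
      induction cs with
      | nil => exact ⟨[], rfl⟩
      | cons a l ihl =>
        obtain ⟨u, hu⟩ := ih a (List.mem_cons_self (a := a) (l := l))
        obtain ⟨us, hus⟩ := ihl (fun x hx => ih x (List.mem_cons_of_mem a hx))
        exact ⟨u :: us, by simp [hu, hus]⟩
    obtain ⟨us, rfl⟩ := this
    exact ⟨node us, psi_node us⟩

def ofTree : Tree Unit → PlaneTree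
  | .nil => node []
  | .node _ l r => node (ofTree l :: (ofTree r).children)

def toTree : PlaneTree → Tree Unit
  | node [] => .nil
  | node (t :: ts) => .node () (toTree t) (toTree (node ts))

lemma toTree_ofTree (T : Tree Unit) : toTree (ofTree T) = T := by
  induction T with
  | nil => rw [ofTree, toTree]
  | node _ l r ihl ihr =>
    rw [ofTree, toTree, node_children, ihl, ihr]

lemma ofTree_toTree (t : PlaneTree) : ofTree (toTree t) = t := by
  induction t using toTree.induct with
  | case1 => rw [toTree, ofTree]
  | case2 t ts ih1 ih2 =>
    rw [toTree, ofTree, ih1, ih2]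
    rfl

lemma vertices_ofTree (T : Tree Unit) : (ofTree T).numVertices = T.numNodes + 1 := by
  induction T with
  | nil => rw [ofTree, numVertices_node]; rfl
  | node _ l r ihl ihr =>
    rw [ofTree, numVertices_node, List.map_cons, List.sum_cons]
    have hc : ((ofTree r).children.map numVertices).sum = (ofTree r).numVertices - 1 := by
      conv_rhs => rw [← node_children (ofTree r)]
      rw [numVertices_node]
      omega
    rw [hc, ihl, ihr]
    simp only [Tree.numNodes, BinaryTree.numNodes]
    omega

end PlaneTree


open PlaneTree

/-- For every integer `n ≥ 0`, the set `B_{2n}` is empty and the set `B_{2n+1}` has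
cardinality `c_n`, the `n`-th Catalan number. -/
theorem B_even_empty_and_B_odd_card_catalan (n : ℕ) :
    {t : PlaneTree | t.numEdges = 2 * n ∧ t.InB} = ∅ ∧
      {t : PlaneTree | t.numEdges = 2 * n + 1 ∧ t.InB}.ncard = catalan n := by
  have hedge : ∀ u : PlaneTree, (psi u).numEdges = 2 * u.numEdges + 1 := by
    intro u
    have h1 := one_le_numVertices u
    simp only [numEdges, psi_vertices]
    omega
  constructor
  · ext t
    simp only [Set.mem_setOf_eq, Set.mem_empty_iff_false, iff_false, not_and]
    intro he hB
    obtain ⟨u, rfl⟩ := inB_exists t hB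
    rw [hedge] at he
    omega
  · have hset : {t : PlaneTree | t.numEdges = 2 * n + 1 ∧ t.InB}
        = psi '' (ofTree '' ↑(Tree.treesOfNumNodesEq n)) := by
      ext t
      simp only [Set.mem_setOf_eq, Set.mem_image, Finset.mem_coe, BinaryTree.mem_treesOfNumNodesEq]
      constructor
      · rintro ⟨he, hB⟩
        obtain ⟨u, rfl⟩ := inB_exists t hB
        refine ⟨u, ⟨toTree u, ?_, ofTree_toTree u⟩, rfl⟩
        have hv := vertices_ofTree (toTree u)
        rw [ofTree_toTree] at hv
        rw [hedge] at he
        simp only [numEdges] at he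
        simp only [Tree.numNodes] at *
        omega
      · rintro ⟨u, ⟨T, hT, rfl⟩, rfl⟩
        refine ⟨?_, psi_inB _⟩
        rw [hedge]
        simp only [numEdges, vertices_ofTree, hT]
        omega
    rw [hset, Set.ncard_image_of_injective _ psi_inj,
      Set.ncard_image_of_injective _ (Function.LeftInverse.injective toTree_ofTree),
      Set.ncard_coe_finset, BinaryTree.treesOfNumNodesEq_card_eq_catalan]
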